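/- Lyapunov decrease for EXP-D-RL under monotonicity: let ε > 0, γ > 0, consider N players with action counts n^p, n = Σ_p n^p, strategy space Δ = Π_p Δ^{n^p} ⊂ ℝⁿ, blockwise soft-max σ : ℝⁿ → ℝⁿ, and a continuous payoff map U : Δ → ℝⁿ such that −U is monotone on Δ, i.e., (x − x')ᵀ(U(x) − U(x')) ≤ 0 for all x, x' ∈ Δ. Let z̄* ∈ ℝⁿ satisfy z̄* = U(σ(z̄*)), and define V(z) = Σ_p (lse_ε(z^p) − lse_ε(z̄*^p) − σ_ε(z̄*^p)ᵀ(z^p − z̄*^p)). Then along every differentiable solution z : ℝ → ℝⁿ of ż(t) = γ(U(σ(z(t))) − z(t)), one has d/dt V(z(t)) ≤ −γε‖σ(z(t)) − σ(z̄*)‖₂² for all t. -/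

import Mathlib

/-
The Bregman storage function `V` has derivative `⟨σ(z) − σ(z̄*), ż⟩` along a trajectory, since
`∇ lse_ε = σ_ε`. Substituting `ż = γ(U(σ(z)) − z)` and `z̄* = U(σ(z̄*))` splits it as
`γ⟨σ(z) − σ(z̄*), U(σ(z)) − U(σ(z̄*))⟩ − γ⟨σ(z) − σ(z̄*), z − z̄*⟩`. The first term is `≤ 0` by
monotonicity of `−U`; the second is bounded below by `ε‖σ(z) − σ(z̄*)‖²`, the co-coercivity of
the soft-max, which comes from `log σ_ε(w) = w/ε − const` and `(a − b)² ≤ (a − b)(log a − log b)`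
on `(0, 1]`.
-/

open Filter

/-- The soft-max function with temperature `ε`. -/
noncomputable def softmax (ε : ℝ) {m : ℕ} (w : Fin m → ℝ) : Fin m → ℝ :=
  fun i => Real.exp (w i / ε) / ∑ j, Real.exp (w j / ε)

/-- The log-sum-exp function with temperature `ε`. -/
noncomputable def lse (ε : ℝ) {m : ℕ} (w : Fin m → ℝ) : ℝ :=
  ε * Real.log (∑ j, Real.exp (w j / ε))

/-- The blockwise soft-max `σ(z) = (σ_ε(z^p))_p`. -/
noncomputable def softmaxBlk (ε : ℝ) {N : ℕ} {nAct : Fin N → ℕ}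
    (z : ∀ p, Fin (nAct p) → ℝ) : ∀ p, Fin (nAct p) → ℝ :=
  fun p => softmax ε (z p)

/-- The strategy space `Δ = Π_p Δ^{n^p}`. -/
def simplexProd (N : ℕ) (nAct : Fin N → ℕ) : Set (∀ p, Fin (nAct p) → ℝ) :=
  {x | ∀ p, (∀ i, 0 ≤ x p i) ∧ ∑ i, x p i = 1}

/-- The Bregman-divergence storage function
`V(z) = Σ_p (lse_ε(z^p) − lse_ε(z̄^p) − σ_ε(z̄^p)ᵀ(z^p − z̄^p))`. -/
noncomputable def bregV (ε : ℝ) {N : ℕ} {nAct : Fin N → ℕ}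
    (zbar z : ∀ p, Fin (nAct p) → ℝ) : ℝ :=
  ∑ p, (lse ε (z p) - lse ε (zbar p) - ∑ i, softmax ε (zbar p) i * (z p i - zbar p i))

open Finset

lemma sum_exp_div_pos {m : ℕ} (hm : 0 < m) (ε : ℝ) (w : Fin m → ℝ) :
    0 < ∑ j, Real.exp (w j / ε) :=
  sum_pos (fun _ _ => Real.exp_pos _) (univ_nonempty_iff.2 (Fin.pos_iff_nonempty.1 hm))

lemma softmax_pos {m : ℕ} (hm : 0 < m) (ε : ℝ) (w : Fin m → ℝ) (i : Fin m) :
    0 < softmax ε w i :=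
  div_pos (Real.exp_pos _) (sum_exp_div_pos hm ε w)

lemma sum_softmax {m : ℕ} (hm : 0 < m) (ε : ℝ) (w : Fin m → ℝ) :
    ∑ i, softmax ε w i = 1 := by
  simp only [softmax, ← sum_div]
  exact div_self (sum_exp_div_pos hm ε w).ne'

lemma softmax_le_one {m : ℕ} (hm : 0 < m) (ε : ℝ) (w : Fin m → ℝ) (i : Fin m) :
    softmax ε w i ≤ 1 :=
  sum_softmax hm ε w ▸
    single_le_sum (fun j _ => (softmax_pos hm ε w j).le) (mem_univ i)

lemma log_softmax {m : ℕ} (hm : 0 < m) (ε : ℝ) (w : Fin m → ℝ) (i : Fin m) :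
    Real.log (softmax ε w i) = w i / ε - Real.log (∑ j, Real.exp (w j / ε)) := by
  rw [softmax, Real.log_div (Real.exp_pos _).ne' (sum_exp_div_pos hm ε w).ne', Real.log_exp]

lemma softmaxBlk_mem_simplexProd {N : ℕ} {nAct : Fin N → ℕ} (hn : ∀ p, 0 < nAct p)
    (ε : ℝ) (y : ∀ p, Fin (nAct p) → ℝ) :
    softmaxBlk ε y ∈ simplexProd N nAct :=
  fun p => ⟨fun i => (softmax_pos (hn p) ε (y p) i).le, sum_softmax (hn p) ε (y p)⟩

lemma sq_sub_le_mul_log_sub {a b : ℝ} (ha : 0 < a) (ha1 : a ≤ 1) (hb : 0 < b) (hb1 : b ≤ 1) :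
    (a - b) ^ 2 ≤ (a - b) * (Real.log a - Real.log b) := by
  wlog hba : b ≤ a generalizing a b
  · convert this hb hb1 ha ha1 (le_of_not_ge hba) using 1 <;> ring
  have hlog : 1 - b / a ≤ Real.log a - Real.log b := by
    rw [← Real.log_div ha.ne' hb.ne', ← inv_div]
    exact Real.one_sub_inv_le_log_of_pos (div_pos ha hb)
  have hlog_nonneg : 0 ≤ Real.log a - Real.log b :=
    sub_nonneg.2 (Real.log_le_log hb hba)
  have hab : a - b ≤ Real.log a - Real.log b := by
    have : a * (1 - b / a) = a - b := by field_simp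
    nlinarith
  nlinarith

/-- The normalising constants of the soft-max drop out because `σ_ε(w) − σ_ε(v)` sums to zero. -/
lemma sum_softmax_sub_mul_log_softmax_sub {m : ℕ} (hm : 0 < m) (ε : ℝ) (w v : Fin m → ℝ) :
    ∑ i, (softmax ε w i - softmax ε v i) * (Real.log (softmax ε w i) - Real.log (softmax ε v i)) =
      (∑ i, (softmax ε w i - softmax ε v i) * (w i - v i)) / ε := by
  set Lw := Real.log (∑ j, Real.exp (w j / ε))
  set Lv := Real.log (∑ j, Real.exp (v j / ε))
  have hterm : ∀ i, (softmax ε w i - softmax ε v i) *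
      (Real.log (softmax ε w i) - Real.log (softmax ε v i)) =
      (softmax ε w i - softmax ε v i) * (w i - v i) / ε
        - (Lw - Lv) * (softmax ε w i - softmax ε v i) := fun i => by
    rw [log_softmax hm, log_softmax hm]
    ring
  simp only [hterm, sum_sub_distrib, ← mul_sum, ← sum_div, sum_softmax hm]
  ring

lemma softmax_cocoercive {m : ℕ} (hm : 0 < m) {ε : ℝ} (hε : 0 < ε) (w v : Fin m → ℝ) :
    ε * ∑ i, (softmax ε w i - softmax ε v i) ^ 2 ≤
      ∑ i, (softmax ε w i - softmax ε v i) * (w i - v i) := by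
  have hsq := sum_le_sum fun i (_ : i ∈ univ) => sq_sub_le_mul_log_sub
    (softmax_pos hm ε w i) (softmax_le_one hm ε w i)
    (softmax_pos hm ε v i) (softmax_le_one hm ε v i)
  rw [sum_softmax_sub_mul_log_softmax_sub hm, le_div_iff₀ hε] at hsq
  linarith

lemma hasDerivAt_lse {m : ℕ} (hm : 0 < m) {ε : ℝ} (hε : ε ≠ 0)
    {f : ℝ → Fin m → ℝ} {f' : Fin m → ℝ} {t : ℝ}
    (hf : ∀ i, HasDerivAt (fun s => f s i) (f' i) t) :
    HasDerivAt (fun s => lse ε (f s)) (∑ i, softmax ε (f t) i * f' i) t := by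
  have hsum : HasDerivAt (fun s => ∑ j, Real.exp (f s j / ε))
      (∑ j, Real.exp (f t j / ε) * (f' j / ε)) t :=
    HasDerivAt.fun_sum fun j _ => ((hf j).div_const ε).exp
  refine ((hsum.log (sum_exp_div_pos hm ε (f t)).ne').const_mul ε).congr_deriv ?_
  rw [sum_div, mul_sum]
  refine sum_congr rfl fun i _ => ?_
  simp only [softmax]
  field_simp

lemma hasDerivAt_bregV {N : ℕ} {nAct : Fin N → ℕ} (hn : ∀ p, 0 < nAct p) {ε : ℝ} (hε : ε ≠ 0)
    (zbar : ∀ p, Fin (nAct p) → ℝ) {z : ℝ → ∀ p, Fin (nAct p) → ℝ}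
    {z' : ∀ p, Fin (nAct p) → ℝ} {t : ℝ} (hz : ∀ p i, HasDerivAt (fun s => z s p i) (z' p i) t) :
    HasDerivAt (fun s => bregV ε zbar (z s))
      (∑ p, ∑ i, (softmax ε (z t p) i - softmax ε (zbar p) i) * z' p i) t := by
  refine HasDerivAt.fun_sum fun p _ => ?_
  have hlse := hasDerivAt_lse (hn p) hε (hz p)
  have hlin : HasDerivAt (fun s => ∑ i, softmax ε (zbar p) i * (z s p i - zbar p i))
      (∑ i, softmax ε (zbar p) i * z' p i) t :=
    HasDerivAt.fun_sum fun i _ => ((hz p i).sub_const (zbar p i)).const_mul _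
  convert (hlse.sub_const (lse ε (zbar p))).fun_sub hlin using 1
  rw [← sum_sub_distrib]
  exact sum_congr rfl fun i _ => by ring

theorem lyapunov_decrease_monotone_general (ε γ : ℝ) (hε : 0 < ε) (hγ : 0 < γ)
    (N : ℕ) (nAct : Fin N → ℕ) (hn : ∀ p, 0 < nAct p)
    (U : (∀ p, Fin (nAct p) → ℝ) → ∀ p, Fin (nAct p) → ℝ)
    (hU_mono : ∀ x ∈ simplexProd N nAct, ∀ x' ∈ simplexProd N nAct,
      ∑ p, ∑ i, (x p i - x' p i) * (U x p i - U x' p i) ≤ 0)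
    (zs : ∀ p, Fin (nAct p) → ℝ) (hzs : U (softmaxBlk ε zs) = zs)
    (z : ℝ → ∀ p, Fin (nAct p) → ℝ)
    (hz : ∀ t, ∀ p, ∀ i,
      HasDerivAt (fun s => z s p i) (γ * (U (softmaxBlk ε (z t)) p i - z t p i)) t) :
    ∀ t, deriv (fun s => bregV ε zs (z s)) t ≤
      -γ * ε * ∑ p, ∑ i, (softmax ε (z t p) i - softmax ε (zs p) i) ^ 2 := by
  intro t
  rw [(hasDerivAt_bregV hn hε.ne' zs (hz t)).deriv]
  have hmono := hU_mono _ (softmaxBlk_mem_simplexProd hn ε (z t))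
    _ (softmaxBlk_mem_simplexProd hn ε zs)
  rw [hzs] at hmono
  have hcoco : ε * ∑ p, ∑ i, (softmax ε (z t p) i - softmax ε (zs p) i) ^ 2 ≤
      ∑ p, ∑ i, (softmax ε (z t p) i - softmax ε (zs p) i) * (z t p i - zs p i) := by
    rw [mul_sum]
    exact sum_le_sum fun p _ => softmax_cocoercive (hn p) hε (z t p) (zs p)
  have hsplit : ∑ p, ∑ i, (softmax ε (z t p) i - softmax ε (zs p) i) *
        (γ * (U (softmaxBlk ε (z t)) p i - z t p i)) =
      γ * (∑ p, ∑ i, (softmaxBlk ε (z t) p i - softmaxBlk ε zs p i) *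
          (U (softmaxBlk ε (z t)) p i - zs p i)
        - ∑ p, ∑ i, (softmax ε (z t p) i - softmax ε (zs p) i) * (z t p i - zs p i)) := by
    simp only [mul_sum, ← sum_sub_distrib, softmaxBlk]
    exact sum_congr rfl fun p _ => sum_congr rfl fun i _ => by ring
  rw [hsplit]
  linarith [mul_nonpos_of_nonneg_of_nonpos hγ.le hmono, mul_le_mul_of_nonneg_left hcoco hγ.le]

/-- Lyapunov decrease for EXP-D-RL under monotonicity: if `−U` is monotone on `Δ`
and `z̄* = U(σ(z̄*))`, then along every solution of `ż = γ(U(σ(z)) − z)` one has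
`d/dt V(z(t)) ≤ −γε‖σ(z(t)) − σ(z̄*)‖₂²`. -/
theorem lyapunov_decrease_monotone (ε γ : ℝ) (hε : 0 < ε) (hγ : 0 < γ)
    (N : ℕ) (nAct : Fin N → ℕ) (hn : ∀ p, 0 < nAct p)
    (U : (∀ p, Fin (nAct p) → ℝ) → ∀ p, Fin (nAct p) → ℝ)
    (hU_cont : ContinuousOn U (simplexProd N nAct))
    (hU_mono : ∀ x ∈ simplexProd N nAct, ∀ x' ∈ simplexProd N nAct,
      ∑ p, ∑ i, (x p i - x' p i) * (U x p i - U x' p i) ≤ 0)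
    (zs : ∀ p, Fin (nAct p) → ℝ) (hzs : U (softmaxBlk ε zs) = zs)
    (z : ℝ → ∀ p, Fin (nAct p) → ℝ)
    (hz : ∀ t, ∀ p, ∀ i,
      HasDerivAt (fun s => z s p i) (γ * (U (softmaxBlk ε (z t)) p i - z t p i)) t) :
    ∀ t, deriv (fun s => bregV ε zs (z s)) t ≤
      -γ * ε * ∑ p, ∑ i, (softmax ε (z t p) i - softmax ε (zs p) i) ^ 2 :=
  lyapunov_decrease_monotone_general ε γ hε hγ N nAct hn U hU_mono zs hzs z hz
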